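/- arXiv:1211.4598 — 4 statements merged into one kernel-verified Lean document; each statement's English description precedes it below -/
import Mathlib

section
/- Let W* : Ω → ℝ be a measurable function with W* > 0 P-almost surely, and let 𝓚 be a set of nonnegative measurable functions X : Ω → ℝ such that E[X/W*] ≤ 1 for every X ∈ 𝓚. Then 𝓚 is bounded in probability: for every ε > 0 there exists c > 0 such that P(X > c) ≤ ε for all X ∈ 𝓚. -/
open MeasureTheory Filter
open scoped Topology

/-!
Split `{X > M a}` according to whether `W* > M`. Since `W*` is real-valued, `P(W* > M)` is small
for large `M`; on the complement `X / W* ≥ a`, an event of probability at most `1 / a` by Markov's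
inequality and `E[X / W*] ≤ 1`, uniformly over `𝓚`.
-/

section

variable {Ω : Type*} [MeasurableSpace Ω] {μ : Measure Ω}

theorem tendsto_measure_setOf_lt_atTop [IsFiniteMeasure μ] {f : Ω → ℝ} (hf : AEMeasurable f μ) :
    Tendsto (fun r : ℝ => μ {ω | r < f ω}) atTop (𝓝 0) := by
  have hanti : Antitone fun r : ℝ => {ω | r < f ω} :=
    fun r s hrs ω (hω : s < f ω) => show r < f ω from hrs.trans_lt hω
  have hempty : ⋂ r : ℝ, {ω | r < f ω} = ∅ :=
    Set.eq_empty_of_forall_notMem fun ω hω => lt_irrefl (f ω) (Set.mem_iInter.mp hω (f ω))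
  have h := tendsto_measure_iInter_atTop (μ := μ)
    (fun r => nullMeasurableSet_lt aemeasurable_const hf) hanti ⟨0, measure_ne_top μ _⟩
  rwa [hempty, measure_empty] at h

theorem meas_le_le_lintegral_ofReal_div {f : Ω → ℝ} (hf : AEMeasurable f μ) {a : ℝ} (ha : 0 < a) :
    μ {ω | a ≤ f ω} ≤ (∫⁻ ω, ENNReal.ofReal (f ω) ∂μ) / ENNReal.ofReal a := by
  have hset : {ω | a ≤ f ω} = {ω | ENNReal.ofReal a ≤ ENNReal.ofReal (f ω)} := by
    ext ω
    simp [ENNReal.ofReal_le_ofReal_iff', ha.not_ge]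
  rw [hset]
  exact meas_ge_le_lintegral_div hf.ennreal_ofReal (ENNReal.ofReal_pos.mpr ha).ne'
    ENNReal.ofReal_ne_top

theorem measure_lt_mul_le_add {W X : Ω → ℝ} (hW : ∀ᵐ ω ∂μ, 0 < W ω) {M a : ℝ} (hM : 0 < M)
    (ha : 0 < a) :
    μ {ω | M * a < X ω} ≤ μ {ω | M < W ω} + μ {ω | a ≤ X ω / W ω} := by
  have hsub : {ω | M * a < X ω} ≤ᵐ[μ] ({ω | M < W ω} ∪ {ω | a ≤ X ω / W ω} : Set Ω) := by
    filter_upwards [hW] with ω hWω hXω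
    rcases lt_or_ge M (W ω) with hMW | hWM
    · exact Or.inl hMW
    · refine Or.inr ?_
      calc a = M * a / M := by field_simp
        _ ≤ X ω / W ω := div_le_div₀ ((mul_pos hM ha).trans hXω).le hXω.le hWω hWM
  exact (measure_mono_ae hsub).trans (measure_union_le _ _)

end

theorem stmt3_general {Ω : Type*} [MeasurableSpace Ω] (P : Measure Ω) [IsProbabilityMeasure P]
    (Wstar : Ω → ℝ) (hW_meas : Measurable Wstar) (hW_pos : ∀ᵐ ω ∂P, 0 < Wstar ω)
    (𝓚 : Set (Ω → ℝ))
    (h𝓚_meas : ∀ X ∈ 𝓚, Measurable X)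
    (h𝓚_exp : ∀ X ∈ 𝓚, ∫⁻ ω, ENNReal.ofReal (X ω / Wstar ω) ∂P ≤ 1) :
    ∀ ε > (0 : ℝ), ∃ c > (0 : ℝ), ∀ X ∈ 𝓚, P {ω | c < X ω} ≤ ENNReal.ofReal ε := by
  intro ε hε
  have hε2 : 0 < ε / 2 := half_pos hε
  obtain ⟨M, hM_tail, hM_pos⟩ :=
    (((tendsto_measure_setOf_lt_atTop (μ := P) hW_meas.aemeasurable).eventually_le_const
      (ENNReal.ofReal_pos.mpr hε2)).and (eventually_gt_atTop 0)).exists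
  have ha : 0 < 2 / ε := div_pos two_pos hε
  refine ⟨M * (2 / ε), mul_pos hM_pos ha, fun X hX => ?_⟩
  have hmarkov : P {ω | 2 / ε ≤ X ω / Wstar ω} ≤ ENNReal.ofReal (ε / 2) :=
    calc P {ω | 2 / ε ≤ X ω / Wstar ω}
        ≤ (∫⁻ ω, ENNReal.ofReal (X ω / Wstar ω) ∂P) / ENNReal.ofReal (2 / ε) :=
          meas_le_le_lintegral_ofReal_div ((h𝓚_meas X hX).div hW_meas).aemeasurable ha
      _ ≤ (ENNReal.ofReal (2 / ε))⁻¹ := by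
          simpa only [one_div] using ENNReal.div_le_div_right (h𝓚_exp X hX) _
      _ = ENNReal.ofReal (ε / 2) := by rw [← ENNReal.ofReal_inv_of_pos ha, inv_div]
  calc P {ω | M * (2 / ε) < X ω}
      ≤ P {ω | M < Wstar ω} + P {ω | 2 / ε ≤ X ω / Wstar ω} :=
        measure_lt_mul_le_add hW_pos hM_pos ha
    _ ≤ ENNReal.ofReal (ε / 2) + ENNReal.ofReal (ε / 2) := add_le_add hM_tail hmarkov
    _ = ENNReal.ofReal ε := by rw [← ENNReal.ofReal_add hε2.le hε2.le, add_halves]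

/-- If `W* > 0` a.s. and `𝓚` is a set of nonnegative measurable functions
with `E[X/W*] ≤ 1` for each `X ∈ 𝓚`, then `𝓚` is bounded in probability: for every
`ε > 0` there is `c > 0` with `P(X > c) ≤ ε` for all `X ∈ 𝓚`. -/
theorem stmt3 {Ω : Type*} [MeasurableSpace Ω] (P : Measure Ω) [IsProbabilityMeasure P]
    (Wstar : Ω → ℝ) (hW_meas : Measurable Wstar) (hW_pos : ∀ᵐ ω ∂P, 0 < Wstar ω)
    (𝓚 : Set (Ω → ℝ))
    (h𝓚_meas : ∀ X ∈ 𝓚, Measurable X)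
    (h𝓚_nonneg : ∀ X ∈ 𝓚, ∀ ω, 0 ≤ X ω)
    (h𝓚_exp : ∀ X ∈ 𝓚, ∫⁻ ω, ENNReal.ofReal (X ω / Wstar ω) ∂P ≤ 1) :
    ∀ ε > (0 : ℝ), ∃ c > (0 : ℝ), ∀ X ∈ 𝓚, P {ω | c < X ω} ≤ ENNReal.ofReal ε :=
  stmt3_general P Wstar hW_meas hW_pos 𝓚 h𝓚_meas h𝓚_exp
end

section
/- Let U : (0,∞) → ℝ be strictly increasing, concave, and differentiable with U′(y) → 0 as y → +∞, extended to 0 by U(0) := lim_{y→0+} U(y) ∈ [−∞, ∞). Let (ξ_n)_{n∈ℕ} be a sequence of nonnegative random variables with sup_n E[ξ_n] < ∞. Then each positive part U(ξ_n)⁺ is integrable and the family (U(ξ_n)⁺)_{n∈ℕ} is uniformly integrable: for every ε > 0 there exists K > 0 such that sup_n E[U(ξ_n)⁺ · 1_{{U(ξ_n)⁺ ≥ K}}] ≤ ε. -/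
/-!
Concavity and `U' → 0` give, for every `δ > 0`, a tangent line with `U y ≤ A + δ y` on
`(0, ∞)`. On the event `{U(ξ)⁺ ≥ K}` with `K ≥ 2A` this bound forces `U(ξ)⁺ ≤ 2δ ξ`, so the
tail integral is at most `2δ · sup_n E[ξ_n]`, uniformly in `n`.
-/

open MeasureTheory Filter Topology

/-- The positive part of the utility `U`, extended to `y ≤ 0` by the right limit of
`max (U ·) 0` at `0⁺` (which equals `sInf` of `max (U ·) 0` over `(0,∞)` since this
function is nondecreasing; it is `0` when `U(0+) = -∞`). -/
noncomputable def Upos (U : ℝ → ℝ) (y : ℝ) : ℝ :=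
  if 0 < y then max (U y) 0 else sInf ((fun z => max (U z) 0) '' Set.Ioi 0)

open Set

theorem ConcaveOn.le_add_mul_sub_of_hasDerivAt {S : Set ℝ} {f : ℝ → ℝ} {f' x y : ℝ}
    (hfc : ConcaveOn ℝ S f) (hx : x ∈ S) (hy : y ∈ S) (hf : HasDerivAt f f' x) :
    f y ≤ f x + f' * (y - x) := by
  rcases lt_trichotomy y x with hyx | rfl | hxy
  · have h := hfc.le_slope_of_hasDerivAt hy hx hyx hf
    rw [slope_def_field, le_div_iff₀ (by linarith)] at h
    linarith
  · simp
  · have h := hfc.slope_le_of_hasDerivAt hx hy hxy hf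
    rw [slope_def_field, div_le_iff₀ (by linarith)] at h
    linarith

/-- The tangent line at a point where the slope is below `δ` dominates `f` on `(0, ∞)`. -/
theorem ConcaveOn.exists_le_add_mul_of_tendsto_deriv {f f' : ℝ → ℝ}
    (hfc : ConcaveOn ℝ (Ioi 0) f) (hf : ∀ x ∈ Ioi (0 : ℝ), HasDerivAt f (f' x) x)
    (hf' : Tendsto f' atTop (𝓝 0)) {δ : ℝ} (hδ : 0 < δ) :
    ∃ A, ∀ y ∈ Ioi (0 : ℝ), f y ≤ A + δ * y := by
  obtain ⟨M, hMδ, hM⟩ :=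
    ((hf'.eventually (gt_mem_nhds hδ)).and (eventually_gt_atTop (0 : ℝ))).exists
  refine ⟨f M - f' M * M, fun y hy => ?_⟩
  have htangent := hfc.le_add_mul_sub_of_hasDerivAt hM hy (hf M hM)
  nlinarith [mem_Ioi.1 hy]

theorem Upos_nonneg (U : ℝ → ℝ) (y : ℝ) : 0 ≤ Upos U y := by
  unfold Upos
  split_ifs
  · exact le_max_right _ _
  · exact le_csInf ⟨max (U 1) 0, 1, mem_Ioi.2 one_pos, rfl⟩
      (by rintro _ ⟨z, -, rfl⟩; exact le_max_right _ _)

theorem measurable_Upos {U : ℝ → ℝ} (hU : ContinuousOn U (Ioi 0)) : Measurable (Upos U) := by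
  have h : Upos U = (Ioi 0).piecewise (fun y => max (U y) 0)
      (fun _ => sInf ((fun z => max (U z) 0) '' Ioi 0)) := by
    funext y
    simp [Upos, Set.piecewise]
  rw [h]
  exact (hU.sup continuousOn_const).measurable_piecewise continuousOn_const measurableSet_Ioi

theorem Upos_le_max_add_mul {U : ℝ → ℝ} {A δ y : ℝ} (hU : ∀ z ∈ Ioi (0 : ℝ), U z ≤ A + δ * z)
    (hδ : 0 < δ) (hy : 0 ≤ y) : Upos U y ≤ max A 0 + δ * y := by
  have hpos : ∀ z ∈ Ioi (0 : ℝ), max (U z) 0 ≤ max A 0 + δ * z := fun z hz =>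
    max_le ((hU z hz).trans (by gcongr; exact le_max_left _ _))
      (by have := mem_Ioi.1 hz; positivity)
  unfold Upos
  split_ifs with hy'
  · exact hpos y hy'
  · obtain rfl : y = 0 := le_antisymm (not_lt.1 hy') hy
    rw [mul_zero, add_zero]
    refine le_of_forall_pos_le_add fun η hη => ?_
    have hz : η / δ ∈ Ioi (0 : ℝ) := div_pos hη hδ
    calc sInf ((fun z => max (U z) 0) '' Ioi 0) ≤ max (U (η / δ)) 0 :=
          csInf_le ⟨0, by rintro _ ⟨z, -, rfl⟩; exact le_max_right _ _⟩ ⟨_, hz, rfl⟩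
      _ ≤ max A 0 + η := by
          simpa [mul_div_cancel₀ η hδ.ne'] using hpos _ hz

section UniformIntegrability

variable {Ω ι : Type*} [MeasurableSpace Ω] {μ : Measure Ω}

theorem Integrable.of_le_const_add_mul [IsFiniteMeasure μ] {f g : Ω → ℝ} {A δ : ℝ}
    (hf : AEStronglyMeasurable f μ) (hf0 : 0 ≤ᵐ[μ] f) (hg : Integrable g μ)
    (hfg : ∀ᵐ ω ∂μ, f ω ≤ A + δ * g ω) : Integrable f μ :=
  ((integrable_const A).add (hg.const_mul δ)).mono' hf <| by
    filter_upwards [hf0, hfg] with ω h0 h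
    rwa [Real.norm_eq_abs, abs_of_nonneg h0]

/-- Where `f ≥ K ≥ 2A`, the bound `f ≤ A + δ g` forces `f ≤ 2 δ g`. -/
theorem setIntegral_ge_le_two_mul_integral {f g : Ω → ℝ} {A δ K : ℝ} (hf : Integrable f μ)
    (hg : Integrable g μ) (hg0 : 0 ≤ᵐ[μ] g) (hfg : ∀ᵐ ω ∂μ, f ω ≤ A + δ * g ω) (hδ : 0 ≤ δ)
    (hK : 2 * A ≤ K) :
    ∫ ω in {ω | K ≤ f ω}, f ω ∂μ ≤ 2 * δ * ∫ ω, g ω ∂μ := by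
  have hS : NullMeasurableSet {ω | K ≤ f ω} μ :=
    nullMeasurableSet_le aemeasurable_const hf.aemeasurable
  have hle : ∀ᵐ ω ∂μ.restrict {ω | K ≤ f ω}, f ω ≤ 2 * δ * g ω := by
    rw [ae_restrict_iff'₀ hS]
    filter_upwards [hfg] with ω h (hω : K ≤ f ω)
    linarith
  calc ∫ ω in {ω | K ≤ f ω}, f ω ∂μ ≤ ∫ ω in {ω | K ≤ f ω}, 2 * δ * g ω ∂μ :=
        setIntegral_mono_ae_restrict hf.integrableOn (hg.const_mul _).integrableOn hle
    _ = 2 * δ * ∫ ω in {ω | K ≤ f ω}, g ω ∂μ := integral_const_mul _ _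
    _ ≤ 2 * δ * ∫ ω, g ω ∂μ := by
        gcongr ?_ * ?_
        exact setIntegral_le_integral hg hg0

theorem exists_setIntegral_ge_le_of_forall_le_const_add_mul {f g : ι → Ω → ℝ} {C : ℝ}
    (hf : ∀ i, Integrable (f i) μ) (hg : ∀ i, Integrable (g i) μ) (hg0 : ∀ i, 0 ≤ᵐ[μ] g i)
    (hgC : ∀ i, ∫ ω, g i ω ∂μ ≤ C)
    (hfg : ∀ δ > 0, ∃ A, ∀ i, ∀ᵐ ω ∂μ, f i ω ≤ A + δ * g i ω) :
    ∀ ε > (0 : ℝ), ∃ K > (0 : ℝ), ∀ i, ∫ ω in {ω | K ≤ f i ω}, f i ω ∂μ ≤ ε := by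
  intro ε hε
  set δ := ε / (2 * (|C| + 1))
  have hδ : 0 < δ := by positivity
  have hδC : 2 * δ * (|C| + 1) = ε := by simp only [δ]; field_simp
  obtain ⟨A, hA⟩ := hfg δ hδ
  refine ⟨max (2 * A) 1, by positivity, fun i => ?_⟩
  calc ∫ ω in {ω | max (2 * A) 1 ≤ f i ω}, f i ω ∂μ ≤ 2 * δ * ∫ ω, g i ω ∂μ :=
        setIntegral_ge_le_two_mul_integral (hf i) (hg i) (hg0 i) (hA i) hδ.le (le_max_left _ _)
    _ ≤ 2 * δ * (|C| + 1) := by gcongr; linarith [hgC i, le_abs_self C]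
    _ = ε := hδC

end UniformIntegrability

theorem stmt5_general {Ω : Type*} [MeasurableSpace Ω] (P : Measure Ω) [IsProbabilityMeasure P]
    (U U' : ℝ → ℝ)
    (hconc : ConcaveOn ℝ (Set.Ioi 0) U)
    (hderiv : ∀ y ∈ Set.Ioi (0 : ℝ), HasDerivAt U (U' y) y)
    (hlim : Tendsto U' atTop (𝓝 0))
    (ξ : ℕ → Ω → ℝ)
    (hξ_nonneg : ∀ n, ∀ᵐ ω ∂P, 0 ≤ ξ n ω)
    (hξ_int : ∀ n, Integrable (ξ n) P)
    (C : ℝ) (hC : ∀ n, ∫ ω, ξ n ω ∂P ≤ C) :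
    (∀ n, Integrable (fun ω => Upos U (ξ n ω)) P) ∧
    ∀ ε > (0 : ℝ), ∃ K > (0 : ℝ), ∀ n,
      ∫ ω in {ω | K ≤ Upos U (ξ n ω)}, Upos U (ξ n ω) ∂P ≤ ε := by
  have hdom : ∀ δ > 0, ∃ A, ∀ n, ∀ᵐ ω ∂P, Upos U (ξ n ω) ≤ A + δ * ξ n ω := by
    intro δ hδ
    obtain ⟨A, hA⟩ := hconc.exists_le_add_mul_of_tendsto_deriv hderiv hlim hδ
    exact ⟨max A 0, fun n => (hξ_nonneg n).mono fun ω => Upos_le_max_add_mul hA hδ⟩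
  have hmeas : Measurable (Upos U) :=
    measurable_Upos fun y hy => (hderiv y hy).continuousAt.continuousWithinAt
  have hint : ∀ n, Integrable (fun ω => Upos U (ξ n ω)) P := by
    obtain ⟨A, hA⟩ := hdom 1 one_pos
    exact fun n => Integrable.of_le_const_add_mul
      (hmeas.comp_aemeasurable (hξ_int n).aemeasurable).aestronglyMeasurable
      (ae_of_all _ fun ω => Upos_nonneg U (ξ n ω)) (hξ_int n) (hA n)
  exact ⟨hint, exists_setIntegral_ge_le_of_forall_le_const_add_mul hint hξ_int hξ_nonneg hC hdom⟩

/-- If `U` is strictly increasing, concave and differentiable on `(0,∞)`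
with `U' → 0` at `+∞`, and `(ξ_n)` are nonnegative random variables with uniformly
bounded expectations, then the positive parts `U(ξ_n)⁺` are integrable and uniformly
integrable. -/
theorem stmt5 {Ω : Type*} [MeasurableSpace Ω] (P : Measure Ω) [IsProbabilityMeasure P]
    (U U' : ℝ → ℝ)
    (hmono : StrictMonoOn U (Set.Ioi 0))
    (hconc : ConcaveOn ℝ (Set.Ioi 0) U)
    (hderiv : ∀ y ∈ Set.Ioi (0 : ℝ), HasDerivAt U (U' y) y)
    (hlim : Tendsto U' atTop (𝓝 0))
    (ξ : ℕ → Ω → ℝ) (hξ_meas : ∀ n, Measurable (ξ n))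
    (hξ_nonneg : ∀ n, ∀ᵐ ω ∂P, 0 ≤ ξ n ω)
    (hξ_int : ∀ n, Integrable (ξ n) P)
    (C : ℝ) (hC : ∀ n, ∫ ω, ξ n ω ∂P ≤ C) :
    (∀ n, Integrable (fun ω => Upos U (ξ n ω)) P) ∧
    ∀ ε > (0 : ℝ), ∃ K > (0 : ℝ), ∀ n,
      ∫ ω in {ω | K ≤ Upos U (ξ n ω)}, Upos U (ξ n ω) ∂P ≤ ε :=
  stmt5_general P U U' hconc hderiv hlim ξ hξ_nonneg hξ_int C hC
end

section
/- Let U : (0,∞) → ℝ be concave and strictly increasing, let r > 0, and let W be a random variable with 1 + r + W > 0 almost surely and U(1 + r + W) integrable. Let (y_k)_{k∈ℕ} be a sequence in (0,1) with y_k → 0, and let (X_k)_{k∈ℕ} be random variables with X_k ≥ −y_k almost surely, converging almost surely to a random variable X with X ≥ 0 almost surely. Suppose that for every k, E[U(1 + r + X_k + (1 − y_k)W)] ≤ E[U(1 + r + W)] (the left-hand expectation being well defined in (−∞, +∞] since the integrand is bounded below by y_k·U(r) + (1 − y_k)·U(1 + r + W)). Then X = 0 almost surely. -/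
/-!
Writing `Z = 1 + r + W`, concavity of `U` and monotonicity give the pointwise lower bound
`U(1 + r + X_k + (1 - y_k) W) - U(Z) ≥ y_k (U(r) - U(Z))`. The nonnegative excess over this
bound has expectation at most `y_k (E[U(Z)] - U(r)) → 0` and converges almost surely to
`U(Z + X) - U(Z)`, so by Fatou's lemma `U(Z + X) = U(Z)` almost surely, and strict monotonicity
forces `X = 0`.
-/

open MeasureTheory Filter Topology

/-- The point `1 + r + x + (1 - t) w` is the convex combination of `1 + r + x / t ≥ r` and
`1 + r + w` with weights `t` and `1 - t`. -/
lemma ConcaveOn.mul_add_mul_le_of_neg_le {U : ℝ → ℝ} (hconc : ConcaveOn ℝ (Set.Ioi 0) U)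
    (hmono : MonotoneOn U (Set.Ioi 0)) {r w x t : ℝ} (hr : 0 < r) (hw : 0 < 1 + r + w)
    (ht0 : 0 < t) (ht1 : t ≤ 1) (hx : -t ≤ x) :
    t * U r + (1 - t) * U (1 + r + w) ≤ U (1 + r + x + (1 - t) * w) := by
  have hra : r ≤ 1 + r + x / t := by
    have : -1 ≤ x / t := by rwa [le_div_iff₀ ht0, neg_one_mul]
    linarith
  have hcomb := hconc.2 (hr.trans_le hra) (Set.mem_Ioi.2 hw) ht0.le (sub_nonneg.2 ht1)
    (add_sub_cancel t 1)
  have hpoint : t • (1 + r + x / t) + (1 - t) • (1 + r + w) = 1 + r + x + (1 - t) * w := by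
    simp only [smul_eq_mul]
    field_simp
    ring
  rw [hpoint, smul_eq_mul, smul_eq_mul] at hcomb
  have hUr := hmono (Set.mem_Ioi.2 hr) (hr.trans_le hra) hra
  nlinarith

lemma ContinuousOn.tendsto_sub_mul_add_one_sub_mul {U : ℝ → ℝ}
    (hU : ContinuousOn U (Set.Ioi 0)) {a c w x : ℝ} {xs y : ℕ → ℝ} (hpos : 0 < a + x + w)
    (hxs : Tendsto xs atTop (𝓝 x)) (hy : Tendsto y atTop (𝓝 0)) :
    Tendsto (fun k => U (a + xs k + (1 - y k) * w) - (y k * c + (1 - y k) * U (a + w))) atTop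
      (𝓝 (U (a + x + w) - U (a + w))) := by
  have harg : Tendsto (fun k => a + xs k + (1 - y k) * w) atTop (𝓝 (a + x + (1 - 0) * w)) :=
    (tendsto_const_nhds.add hxs).add ((tendsto_const_nhds.sub hy).mul tendsto_const_nhds)
  have hmix : Tendsto (fun k => y k * c + (1 - y k) * U (a + w)) atTop
      (𝓝 (0 * c + (1 - 0) * U (a + w))) :=
    (hy.mul_const _).add ((tendsto_const_nhds.sub hy).mul_const _)
  simp only [zero_mul, zero_add, sub_zero, one_mul] at harg hmix
  exact ((hU.continuousAt (isOpen_Ioi.mem_nhds hpos)).tendsto.comp harg).sub hmix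

lemma ae_eq_zero_of_tendsto_of_integral_tendsto_zero {α : Type*} [MeasurableSpace α]
    {μ : Measure α} {f : ℕ → α → ℝ} {g : α → ℝ} (hf : ∀ k, Integrable (f k) μ)
    (hf_nonneg : ∀ k, 0 ≤ᵐ[μ] f k) (hlim : ∀ᵐ a ∂μ, Tendsto (fun k => f k a) atTop (𝓝 (g a)))
    (hint : Tendsto (fun k => ∫ a, f k a ∂μ) atTop (𝓝 0)) :
    g =ᵐ[μ] 0 := by
  have hg_meas : AEMeasurable g μ :=
    aemeasurable_of_tendsto_metrizable_ae _ (fun k => (hf k).aemeasurable) hlim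
  have hlintegral : ∫⁻ a, ENNReal.ofReal (g a) ∂μ = 0 := by
    refine le_antisymm ?_ zero_le
    calc ∫⁻ a, ENNReal.ofReal (g a) ∂μ
        = ∫⁻ a, liminf (fun k => ENNReal.ofReal (f k a)) atTop ∂μ := by
          refine lintegral_congr_ae ?_
          filter_upwards [hlim] with a ha using (ENNReal.tendsto_ofReal ha).liminf_eq.symm
      _ ≤ liminf (fun k => ∫⁻ a, ENNReal.ofReal (f k a) ∂μ) atTop :=
          lintegral_liminf_le' fun k => (hf k).aemeasurable.ennreal_ofReal
      _ = liminf (fun k => ENNReal.ofReal (∫ a, f k a ∂μ)) atTop := by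
          simp_rw [ofReal_integral_eq_lintegral_ofReal (hf _) (hf_nonneg _)]
      _ = 0 := by simpa using (ENNReal.tendsto_ofReal hint).liminf_eq
  have hg_nonpos := (lintegral_eq_zero_iff' hg_meas.ennreal_ofReal).1 hlintegral
  have hg_nonneg : ∀ᵐ a ∂μ, 0 ≤ g a := by
    filter_upwards [hlim, ae_all_iff.2 hf_nonneg] with a ha hpos
    exact ge_of_tendsto' ha hpos
  filter_upwards [hg_nonpos, hg_nonneg] with a ha hpos
  exact le_antisymm (ENNReal.ofReal_eq_zero.1 ha) hpos

lemma integral_sub_mul_add_mul_le {α : Type*} [MeasurableSpace α] {μ : Measure α}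
    [IsProbabilityMeasure μ] {f g : α → ℝ} (hf : Integrable f μ) (hg : Integrable g μ)
    (hfg : ∫ a, f a ∂μ ≤ ∫ a, g a ∂μ) (t c : ℝ) :
    ∫ a, f a - (t * c + (1 - t) * g a) ∂μ ≤ t * (∫ a, g a ∂μ - c) := by
  have hmix : Integrable (fun a => t * c + (1 - t) * g a) μ :=
    (integrable_const _).add (hg.const_mul _)
  rw [integral_sub hf hmix,
    integral_add (integrable_const _) (hg.const_mul _), integral_const_mul (1 - t)]
  simp only [integral_const, probReal_univ, one_smul]
  linarith

theorem stmt8_general {Ω : Type*} [MeasurableSpace Ω] (P : Measure Ω) [IsProbabilityMeasure P]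
    (U : ℝ → ℝ)
    (hconc : ConcaveOn ℝ (Set.Ioi 0) U) (hmono : StrictMonoOn U (Set.Ioi 0))
    (r : ℝ) (hr : 0 < r)
    (W : Ω → ℝ) (hWpos : ∀ᵐ ω ∂P, 0 < 1 + r + W ω)
    (hWint : Integrable (fun ω => U (1 + r + W ω)) P)
    (y : ℕ → ℝ) (hy : ∀ k, y k ∈ Set.Ioo (0 : ℝ) 1) (hy0 : Tendsto y atTop (𝓝 0))
    (X : ℕ → Ω → ℝ)
    (hXlb : ∀ k, ∀ᵐ ω ∂P, -(y k) ≤ X k ω)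
    (Xlim : Ω → ℝ)
    (hconv : ∀ᵐ ω ∂P, Tendsto (fun k => X k ω) atTop (𝓝 (Xlim ω)))
    (hXlim_nonneg : ∀ᵐ ω ∂P, 0 ≤ Xlim ω)
    (hint : ∀ k, Integrable (fun ω => U (1 + r + X k ω + (1 - y k) * W ω)) P)
    (hineq : ∀ k, ∫ ω, U (1 + r + X k ω + (1 - y k) * W ω) ∂P
                    ≤ ∫ ω, U (1 + r + W ω) ∂P) :
    ∀ᵐ ω ∂P, Xlim ω = 0 := by
  set Y : ℕ → Ω → ℝ := fun k ω => U (1 + r + X k ω + (1 - y k) * W ω) -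
    (y k * U r + (1 - y k) * U (1 + r + W ω))
  have hbound_int : ∀ k, Integrable (fun ω => y k * U r + (1 - y k) * U (1 + r + W ω)) P :=
    fun k => (integrable_const _).add (hWint.const_mul _)
  have hY_int : ∀ k, Integrable (Y k) P := fun k => (hint k).sub (hbound_int k)
  have hY_nonneg : ∀ k, 0 ≤ᵐ[P] Y k := fun k => by
    filter_upwards [hWpos, hXlb k] with ω hw hx
    exact sub_nonneg.2 (hconc.mul_add_mul_le_of_neg_le hmono.monotoneOn hr hw (hy k).1
      (hy k).2.le hx)
  have hY_lim : ∀ᵐ ω ∂P,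
      Tendsto (fun k => Y k ω) atTop (𝓝 (U (1 + r + Xlim ω + W ω) - U (1 + r + W ω))) := by
    filter_upwards [hWpos, hconv, hXlim_nonneg] with ω hw hx hx0
    exact (hconc.continuousOn isOpen_Ioi).tendsto_sub_mul_add_one_sub_mul (by linarith) hx hy0
  have hY_integral : Tendsto (fun k => ∫ ω, Y k ω ∂P) atTop (𝓝 0) :=
    tendsto_of_tendsto_of_tendsto_of_le_of_le tendsto_const_nhds
      (by simpa using hy0.mul_const ((∫ ω, U (1 + r + W ω) ∂P) - U r))
      (fun k => integral_nonneg_of_ae (hY_nonneg k))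
      fun k => integral_sub_mul_add_mul_le (hint k) hWint (hineq k) (y k) (U r)
  filter_upwards [ae_eq_zero_of_tendsto_of_integral_tendsto_zero hY_int hY_nonneg hY_lim
    hY_integral, hWpos, hXlim_nonneg] with ω hD hw hx0
  by_contra hne
  have hlt : U (1 + r + W ω) < U (1 + r + Xlim ω + W ω) :=
    hmono hw (by simp only [Set.mem_Ioi]; linarith) (by linarith [hx0.lt_of_ne' hne])
  exact hlt.ne' (sub_eq_zero.1 hD)

/-- Let `U` be concave and strictly increasing on `(0,∞)`, `r > 0`, and `W`
with `1 + r + W > 0` a.s. and `U(1+r+W)` integrable. If `y_k ∈ (0,1)`, `y_k → 0`,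
`X_k ≥ -y_k` a.s., `X_k → X` a.s. with `X ≥ 0` a.s., and for every `k` the (well-defined)
expectation `E[U(1+r+X_k+(1-y_k)W)]` is at most `E[U(1+r+W)]` (expressed here, equivalently,
as integrability of the integrand together with the inequality of integrals), then `X = 0` a.s. -/
theorem stmt8 {Ω : Type*} [MeasurableSpace Ω] (P : Measure Ω) [IsProbabilityMeasure P]
    (U : ℝ → ℝ)
    (hconc : ConcaveOn ℝ (Set.Ioi 0) U) (hmono : StrictMonoOn U (Set.Ioi 0))
    (r : ℝ) (hr : 0 < r)
    (W : Ω → ℝ) (hW : Measurable W) (hWpos : ∀ᵐ ω ∂P, 0 < 1 + r + W ω)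
    (hWint : Integrable (fun ω => U (1 + r + W ω)) P)
    (y : ℕ → ℝ) (hy : ∀ k, y k ∈ Set.Ioo (0 : ℝ) 1) (hy0 : Tendsto y atTop (𝓝 0))
    (X : ℕ → Ω → ℝ) (hX : ∀ k, Measurable (X k))
    (hXlb : ∀ k, ∀ᵐ ω ∂P, -(y k) ≤ X k ω)
    (Xlim : Ω → ℝ) (hXlim_meas : Measurable Xlim)
    (hconv : ∀ᵐ ω ∂P, Tendsto (fun k => X k ω) atTop (𝓝 (Xlim ω)))
    (hXlim_nonneg : ∀ᵐ ω ∂P, 0 ≤ Xlim ω)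
    (hint : ∀ k, Integrable (fun ω => U (1 + r + X k ω + (1 - y k) * W ω)) P)
    (hineq : ∀ k, ∫ ω, U (1 + r + X k ω + (1 - y k) * W ω) ∂P
                    ≤ ∫ ω, U (1 + r + W ω) ∂P) :
    ∀ᵐ ω ∂P, Xlim ω = 0 :=
  stmt8_general P U hconc hmono r hr W hWpos hWint y hy hy0 X hXlb Xlim hconv hXlim_nonneg hint
    hineq
end

section
/- Let m ∈ ℕ, let W ≥ 0 be a random variable, and for l = 1, …, m let W_l > 0 almost surely and Z_l > 0 almost surely be random variables with E[Z_l·W/W_l] ≤ 1. Let β_1, …, β_m ≥ 0 with Σ_{l=1}^m β_l = 1, let b > 0, κ_1, …, κ_m > 0, α > 0, and let A be a measurable set such that Z_l ≥ b·κ_l almost surely on A for each l = 1, …, m. Then E[ min( Σ_{l=1}^m β_l·W/W_l , α ) ] ≤ α·P(Aᶜ) + b⁻¹·Σ_{l=1}^m β_l/κ_l. -/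
open MeasureTheory Filter
open scoped ENNReal BigOperators

/-! Since `E[X] ≤ E[X⁺]`, it suffices to bound Lebesgue integrals of positive parts. Pointwise,
`min(∑ β_l W/W_l, α)⁺ ≤ α·1_{Aᶜ} + ∑ (β_l/(b κ_l)) (Z_l W/W_l)⁺`: off `A` the truncation at `α`
suffices, and on `A` each `β_l ≤ (β_l/(b κ_l)) Z_l`. Integrating, each `E[(Z_l W/W_l)⁺] ≤ 1`. -/

namespace ENNReal

theorem ofReal_mul_le_ofReal_div_mul {a c z x : ℝ} (ha : 0 ≤ a) (hc : 0 < c) (hcz : c ≤ z) :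
    ENNReal.ofReal (a * x) ≤ ENNReal.ofReal (a / c) * ENNReal.ofReal (z * x) := by
  have hac : a ≤ a / c * z := by
    rw [div_mul_eq_mul_div, le_div_iff₀ hc]
    exact mul_le_mul_of_nonneg_left hcz ha
  rw [ENNReal.ofReal_mul ha, ENNReal.ofReal_mul (hc.le.trans hcz), ← mul_assoc,
    ← ENNReal.ofReal_mul (div_nonneg ha hc.le)]
  gcongr

theorem ofReal_sum_le {ι : Type*} (s : Finset ι) (f : ι → ℝ) :
    ENNReal.ofReal (∑ i ∈ s, f i) ≤ ∑ i ∈ s, ENNReal.ofReal (f i) :=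
  Finset.le_sum_of_subadditive _ ENNReal.ofReal_zero.le (fun _ _ => ENNReal.ofReal_add_le) s f

theorem ofReal_min_le_indicator_compl_add {Ω : Type*} {A : Set Ω} {ω : Ω} {x α : ℝ} {g : ℝ≥0∞}
    (h : ω ∈ A → ENNReal.ofReal x ≤ g) :
    ENNReal.ofReal (min x α) ≤ Aᶜ.indicator (fun _ => ENNReal.ofReal α) ω + g := by
  by_cases hω : ω ∈ A
  · rw [Set.indicator_of_notMem (Set.notMem_compl_iff.2 hω), zero_add]
    exact (ENNReal.ofReal_le_ofReal (min_le_left x α)).trans (h hω)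
  · rw [Set.indicator_of_mem (Set.mem_compl hω)]
    exact (ENNReal.ofReal_le_ofReal (min_le_right x α)).trans le_self_add

end ENNReal

namespace MeasureTheory

variable {Ω : Type*} [MeasurableSpace Ω] {μ : Measure Ω}

theorem integral_le_toReal_lintegral_ofReal (f : Ω → ℝ) :
    ∫ ω, f ω ∂μ ≤ (∫⁻ ω, ENNReal.ofReal (f ω) ∂μ).toReal := by
  by_cases hf : Integrable f μ
  · rw [integral_eq_lintegral_pos_part_sub_lintegral_neg_part hf]
    exact sub_le_self _ ENNReal.toReal_nonneg
  · rw [integral_undef hf]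
    exact ENNReal.toReal_nonneg

theorem integral_le_of_lintegral_ofReal_le {f : Ω → ℝ} {c : ℝ} (hc : 0 ≤ c)
    (h : ∫⁻ ω, ENNReal.ofReal (f ω) ∂μ ≤ ENNReal.ofReal c) : ∫ ω, f ω ∂μ ≤ c :=
  (integral_le_toReal_lintegral_ofReal f).trans (ENNReal.toReal_le_of_le_ofReal hc h)

theorem integral_min_le_mul_measure_compl_add_sum [IsFiniteMeasure μ] {ι : Type*} [Fintype ι]
    {f : Ω → ℝ} {u : ι → Ω → ℝ} (hu : ∀ i, AEMeasurable (u i) μ)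
    (hu_le : ∀ i, ∫⁻ ω, ENNReal.ofReal (u i ω) ∂μ ≤ 1) {c : ι → ℝ} (hc : ∀ i, 0 ≤ c i)
    {α : ℝ} (hα : 0 ≤ α) {A : Set Ω}
    (hfA : ∀ᵐ ω ∂μ, ω ∈ A →
      ENNReal.ofReal (f ω) ≤ ∑ i, ENNReal.ofReal (c i) * ENNReal.ofReal (u i ω)) :
    ∫ ω, min (f ω) α ∂μ ≤ α * (μ Aᶜ).toReal + ∑ i, c i := by
  have hsum_meas : ∀ i ∈ Finset.univ, AEMeasurable
      (fun ω => ENNReal.ofReal (c i) * ENNReal.ofReal (u i ω)) μ :=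
    fun i _ => (hu i).ennreal_ofReal.const_mul _
  have hc_sum : 0 ≤ ∑ i, c i := Finset.sum_nonneg fun i _ => hc i
  refine integral_le_of_lintegral_ofReal_le (by positivity) ?_
  calc ∫⁻ ω, ENNReal.ofReal (min (f ω) α) ∂μ
      ≤ ∫⁻ ω, Aᶜ.indicator (fun _ => ENNReal.ofReal α) ω
          + ∑ i, ENNReal.ofReal (c i) * ENNReal.ofReal (u i ω) ∂μ :=
        lintegral_mono_ae <| hfA.mono fun ω h => ENNReal.ofReal_min_le_indicator_compl_add h
    _ = ∫⁻ ω, Aᶜ.indicator (fun _ => ENNReal.ofReal α) ω ∂μ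
          + ∑ i, ENNReal.ofReal (c i) * ∫⁻ ω, ENNReal.ofReal (u i ω) ∂μ := by
        rw [lintegral_add_right' _ (Finset.aemeasurable_fun_sum _ hsum_meas),
          lintegral_finsetSum' _ hsum_meas]
        simp_rw [lintegral_const_mul' _ _ ENNReal.ofReal_ne_top]
    _ ≤ ENNReal.ofReal α * μ Aᶜ + ∑ i, ENNReal.ofReal (c i) * 1 := by
        gcongr with i
        exacts [lintegral_indicator_const_le _ _, hu_le i]
    _ = ENNReal.ofReal (α * (μ Aᶜ).toReal + ∑ i, c i) := by
        rw [ENNReal.ofReal_add (by positivity) hc_sum,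
          ENNReal.ofReal_mul hα, ENNReal.ofReal_toReal (measure_ne_top μ _),
          ENNReal.ofReal_sum_of_nonneg fun i _ => hc i]
        simp_rw [mul_one]

end MeasureTheory

theorem stmt9_general {Ω : Type*} [MeasurableSpace Ω] (P : Measure Ω) [IsProbabilityMeasure P]
    (m : ℕ) (W : Ω → ℝ) (hWmeas : Measurable W)
    (Wl Zl : Fin m → Ω → ℝ)
    (hWlmeas : ∀ l, Measurable (Wl l)) (hZlmeas : ∀ l, Measurable (Zl l))
    (hE : ∀ l, ∫⁻ ω, ENNReal.ofReal (Zl l ω * W ω / Wl l ω) ∂P ≤ 1)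
    (β : Fin m → ℝ) (hβ : ∀ l, 0 ≤ β l)
    (b : ℝ) (hb : 0 < b) (κ : Fin m → ℝ) (hκ : ∀ l, 0 < κ l)
    (α : ℝ) (hα : 0 < α)
    (A : Set Ω)
    (hAZ : ∀ l, ∀ᵐ ω ∂P, ω ∈ A → b * κ l ≤ Zl l ω) :
    ∫ ω, min (∑ l, β l * W ω / Wl l ω) α ∂P
      ≤ α * (P Aᶜ).toReal + b⁻¹ * ∑ l, β l / κ l := by
  have hbκ : ∀ l, 0 < b * κ l := fun l => mul_pos hb (hκ l)
  have hweights : ∑ l, β l / (b * κ l) = b⁻¹ * ∑ l, β l / κ l := by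
    rw [Finset.mul_sum]
    exact Finset.sum_congr rfl fun l _ => by field_simp
  rw [← hweights]
  refine integral_min_le_mul_measure_compl_add_sum (u := fun l ω => Zl l ω * W ω / Wl l ω)
    (fun l => (((hZlmeas l).mul hWmeas).div (hWlmeas l)).aemeasurable) hE
    (fun l => div_nonneg (hβ l) (hbκ l).le) hα.le ?_
  filter_upwards [ae_all_iff.2 hAZ] with ω hZ hωA
  refine (ENNReal.ofReal_sum_le _ _).trans (Finset.sum_le_sum fun l _ => ?_)
  simpa only [mul_div_assoc] using
    ENNReal.ofReal_mul_le_ofReal_div_mul (hβ l) (hbκ l) (hZ l hωA)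

/-- If `W ≥ 0`, `W_l > 0` a.s., `Z_l > 0` a.s. with `E[Z_l W / W_l] ≤ 1`,
`β_l ≥ 0` sum to `1`, `b > 0`, `κ_l > 0`, `α > 0`, and `Z_l ≥ b κ_l` a.s. on `A`, then
`E[min(∑ β_l W/W_l, α)] ≤ α P(Aᶜ) + b⁻¹ ∑ β_l/κ_l`. -/
theorem stmt9 {Ω : Type*} [MeasurableSpace Ω] (P : Measure Ω) [IsProbabilityMeasure P]
    (m : ℕ) (W : Ω → ℝ) (hWmeas : Measurable W) (hW : ∀ ω, 0 ≤ W ω)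
    (Wl Zl : Fin m → Ω → ℝ)
    (hWlmeas : ∀ l, Measurable (Wl l)) (hZlmeas : ∀ l, Measurable (Zl l))
    (hWl : ∀ l, ∀ᵐ ω ∂P, 0 < Wl l ω) (hZl : ∀ l, ∀ᵐ ω ∂P, 0 < Zl l ω)
    (hE : ∀ l, ∫⁻ ω, ENNReal.ofReal (Zl l ω * W ω / Wl l ω) ∂P ≤ 1)
    (β : Fin m → ℝ) (hβ : ∀ l, 0 ≤ β l) (hβsum : ∑ l, β l = 1)
    (b : ℝ) (hb : 0 < b) (κ : Fin m → ℝ) (hκ : ∀ l, 0 < κ l)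
    (α : ℝ) (hα : 0 < α)
    (A : Set Ω) (hA : MeasurableSet A)
    (hAZ : ∀ l, ∀ᵐ ω ∂P, ω ∈ A → b * κ l ≤ Zl l ω) :
    ∫ ω, min (∑ l, β l * W ω / Wl l ω) α ∂P
      ≤ α * (P Aᶜ).toReal + b⁻¹ * ∑ l, β l / κ l :=
  stmt9_general P m W hWmeas Wl Zl hWlmeas hZlmeas hE β hβ b hb κ hκ α hα A hAZ
end
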